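/- Let K be a field, ν a valuation on K[x] with trivial support, K̄ an algebraic closure of K, μ an extension of ν to K̄[x], and Λ a complete sequence of key polynomials for ν without last element. For each Q ∈ Λ choose a root a_Q ∈ K̄ of Q with μ(x−a_Q) = δ(Q). Then {a_Q}_{Q∈Λ} is a pseudo-convergent sequence for μ of transcendental type, without a limit in K̄, and x is a limit of it (in K̄[x]). -/

import Mathlib

open Polynomial

section KeyPolyDefs

variable {K : Type*} [Field K] {Γ : Type*} [AddCommGroup Γ] [LinearOrder Γ] [IsOrderedAddMonoid Γ]

/-- The value `ν f` read in `Γ` (junk value `0` when `ν f = ⊤`). -/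
noncomputable def aval (ν : AddValuation (Polynomial K) (WithTop Γ)) (f : Polynomial K) : Γ :=
  (ν f).untopD 0

/-- `ν` has trivial support: only `0` has value `⊤`. -/
def TrivialSupport (ν : AddValuation (Polynomial K) (WithTop Γ)) : Prop :=
  ∀ f : Polynomial K, ν f = ⊤ → f = 0

/-- The set of indices `r`, `1 ≤ r ≤ deg f` with `∂_r f ≠ 0`, over which `ε(f)` is computed. -/
noncomputable def epsSupport (f : Polynomial K) : Finset ℕ :=
  @Finset.filter _ (fun r => f.hasseDeriv r ≠ 0) (Classical.decPred _) (Finset.Icc 1 f.natDegree)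

/-- `ε(f) = max_{r ≥ 1} (ν f - ν ∂_r f) / r`, computed in the divisible group `Γ`. -/
noncomputable def eps [Module ℚ Γ] (ν : AddValuation (Polynomial K) (WithTop Γ))
    (f : Polynomial K) : Γ :=
  if h : (epsSupport f).Nonempty then
    (epsSupport f).sup' h fun r => ((r : ℚ)⁻¹) • (aval ν f - aval ν (f.hasseDeriv r))
  else 0

/-- `Q` is a key polynomial for `ν`: `Q` is monic and every `f` with `ε(f) ≥ ε(Q)` satisfies
`deg f ≥ deg Q`. -/
def IsKeyPoly [Module ℚ Γ] (ν : AddValuation (Polynomial K) (WithTop Γ))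
    (Q : Polynomial K) : Prop :=
  Q.Monic ∧ 0 < Q.natDegree ∧
    ∀ f : Polynomial K, 0 < f.natDegree → eps ν Q ≤ eps ν f → Q.natDegree ≤ f.natDegree

/-- The `i`-th coefficient of the `q`-expansion of a polynomial. -/
noncomputable def qCoeff (q : Polynomial K) : ℕ → Polynomial K → Polynomial K
  | 0, p => p % q
  | n + 1, p => qCoeff q n (p / q)

/-- The `q`-truncation `ν_q` of `ν`:  `ν_q(p) = min_i ν(p_i q^i)` where `p = Σ p_i q^i`
is the `q`-expansion of `p`. -/
noncomputable def trunc (ν : AddValuation (Polynomial K) (WithTop Γ)) (q p : Polynomial K) :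
    WithTop Γ :=
  (Finset.range (p.natDegree + 1)).inf fun i => ν (qCoeff q i p * q ^ i)

variable {L : Type*} [Field L] [Algebra K L]

/-- `δ(f)`: the maximal value `μ(x - a)` over the roots `a` of `f` in `L`
(junk value `0` if `f` has no roots in `L`). -/
noncomputable def delta (μ : AddValuation (Polynomial L) (WithTop Γ)) (f : Polynomial K) : Γ :=
  letI := Classical.decEq L
  if h : ((f.map (algebraMap K L)).roots.toFinset).Nonempty then
    ((f.map (algebraMap K L)).roots.toFinset).sup' h fun a => aval μ (X - C a)
  else 0

/-- `μ` on `L[x]` extends `ν` on `K[x]`. -/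
def IsExtension (μ : AddValuation (Polynomial L) (WithTop Γ))
    (ν : AddValuation (Polynomial K) (WithTop Γ)) : Prop :=
  ∀ f : Polynomial K, μ (f.map (algebraMap K L)) = ν f

/-- `w` on `K(x)` extends `ν` on `K[x]`. -/
def ExtendsToRatFunc (w : AddValuation (RatFunc K) (WithTop Γ))
    (ν : AddValuation (Polynomial K) (WithTop Γ)) : Prop :=
  ∀ p : Polynomial K, w (algebraMap (Polynomial K) (RatFunc K) p) = ν p

/-- The residue of `f` is transcendental over the residue field `Kν`:  every polynomial with
coefficients in the valuation ring of `K`, at least one of which is a unit, keeps value `0`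
when evaluated at `f`. -/
def ResidueTranscendentalElem (w : AddValuation (RatFunc K) (WithTop Γ)) (f : RatFunc K) : Prop :=
  ∀ (n : ℕ) (c : ℕ → K),
    (∀ i ≤ n, 0 ≤ w (algebraMap K (RatFunc K) (c i))) →
    (∃ i ≤ n, w (algebraMap K (RatFunc K) (c i)) = 0) →
    w (∑ i ∈ Finset.range (n + 1), algebraMap K (RatFunc K) (c i) * f ^ i) = 0

/-- The residue of `g` is algebraic over the residue field `Kν`: some polynomial with
coefficients in the valuation ring of `K`, at least one of which is a unit, gets positive
value when evaluated at `g`. -/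
def ResidueAlgebraicElem (w : AddValuation (RatFunc K) (WithTop Γ)) (g : RatFunc K) : Prop :=
  ∃ (n : ℕ) (c : ℕ → K),
    (∀ i ≤ n, 0 ≤ w (algebraMap K (RatFunc K) (c i))) ∧
    (∃ i ≤ n, w (algebraMap K (RatFunc K) (c i)) = 0) ∧
    0 < w (∑ i ∈ Finset.range (n + 1), algebraMap K (RatFunc K) (c i) * g ^ i)

/-- `w` is residue-transcendental: some `f` with `w f = 0` has transcendental residue. -/
def IsResidueTranscendental (w : AddValuation (RatFunc K) (WithTop Γ)) : Prop :=
  ∃ f : RatFunc K, w f = 0 ∧ ResidueTranscendentalElem w f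

/-- `w` is value-transcendental: some value `w f` is torsion-free over the value group
`νK` of `K`, i.e. `n ν(f) ∉ νK` for every `n ≥ 1`. -/
def IsValueTranscendental (w : AddValuation (RatFunc K) (WithTop Γ)) : Prop :=
  ∃ f : RatFunc K, f ≠ 0 ∧
    ∀ n : ℕ, 0 < n → ∀ c : K, c ≠ 0 → w (f ^ n) ≠ w (algebraMap K (RatFunc K) c)

/-- `w` is valuation-transcendental: it is value-transcendental or residue-transcendental. -/
def IsValuationTranscendental (w : AddValuation (RatFunc K) (WithTop Γ)) : Prop :=
  IsValueTranscendental w ∨ IsResidueTranscendental w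

end KeyPolyDefs

section MinimalPairDefs

variable {Γ : Type*} [AddCommGroup Γ] [LinearOrder Γ] [IsOrderedAddMonoid Γ] {L : Type*} [Field L]

/-- `(a, d)` is a minimal pair for the valuation (w.r.t. the extension `μ` to `L[x]`):
every `b` with `μ(b - a) ≥ d` satisfies `[K(b) : K] ≥ [K(a) : K]`. -/
def IsMinimalPair (K : Type*) [Field K] [Algebra K L]
    (μ : AddValuation (Polynomial L) (WithTop Γ)) (a : L) (d : Γ) : Prop :=
  ∀ b : L, (d : WithTop Γ) ≤ μ (C (b - a)) →
    (minpoly K a).natDegree ≤ (minpoly K b).natDegree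

/-- `(a, d)` is a minimal pair of definition: a minimal pair with `μ(x - a) = d ≥ μ(x - b)`
for every `b ∈ L`. -/
def IsMinimalPairOfDefinition (K : Type*) [Field K] [Algebra K L]
    (μ : AddValuation (Polynomial L) (WithTop Γ)) (a : L) (d : Γ) : Prop :=
  IsMinimalPair K μ a d ∧ μ (X - C a) = (d : WithTop Γ) ∧
    ∀ b : L, μ (X - C b) ≤ (d : WithTop Γ)

end MinimalPairDefs


/-!
For nonconstant `f`, write `f = c ∏ (x - a)` over `K̄` with all `μ(x - a) ≤ δ(f)`. Every term of
the Hasse derivative `∂_r f` then has value at least `ν(f) - r δ(f)`, and for `r` the number of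
roots with `μ(x - a) = δ(f)` a single term attains this bound; hence `ε(f) = δ(f)`. So
`μ(x - a_Q) = ε(Q)` increases strictly along `Λ`, and the ultrametric inequality gives
`μ(a_{Q'} - a_Q) = ε(Q)` for `Q < Q'`: the sequence is pseudo-convergent with limit `x`.

The heart of the matter is cofinality: every `b ∈ K̄` has `μ(x - b) < ε(Q)` for some `Q ∈ Λ`.
Otherwise let `g` be the minimal polynomial of `b`, `Q ∈ Λ` with `ν_Q(g) = ν(g)`, and `c` a root of
some `Q' > Q` with `μ(x - c) = ε(Q')` different from every `μ(x - a)`, `a` a root of `g` (there are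
infinitely many values `ε(Q')` since `Λ` has no last element). Evaluation at `c` is a valuation
agreeing with `μ` on every polynomial whose roots are farther from `x` than `c`: on `Q` and, `Q`
being a key polynomial, on all polynomials of smaller degree. Hence its value on `g` is at least
`ν_Q(g) = ν(g)`; yet it is strictly below `μ(g)`, because the root `b` is closer to `x` than `c`.

Cofinality excludes a limit in `K̄`, and it gives the transcendental type: as soon as
`μ(x - a_Q)` exceeds `μ(x - r)` for all roots `r` of `f`, `μ(f(a_Q)) = μ(f)`.
-/

namespace Set

variable {α β : Type*} [LinearOrder α]

lemma infinite_image_of_forall_exists_gt {s : Set β} {f : β → α} (hs : s.Nonempty)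
    (h : ∀ x ∈ s, ∃ y ∈ s, f x < f y) : (f '' s).Infinite := by
  intro hfin
  obtain ⟨_, ⟨x, hx, rfl⟩, hmax⟩ := hfin.exists_maximal (hs.image f)
  obtain ⟨y, hy, hxy⟩ := h x hx
  exact hxy.not_ge (hmax ⟨y, hy, rfl⟩ hxy.le)

end Set

lemma AddValuation.map_multiset_prod {R Γ₀ : Type*} [CommRing R]
    [LinearOrderedAddCommMonoidWithTop Γ₀] (v : AddValuation R Γ₀) (s : Multiset R) :
    v s.prod = (s.map v).sum := by
  induction s using Multiset.induction_on with
  | empty => simp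
  | cons a s ih => rw [Multiset.prod_cons, v.map_mul, ih, Multiset.map_cons, Multiset.sum_cons]

lemma inv_natCast_smul_le_iff {Γ : Type*} [AddCommGroup Γ] [LinearOrder Γ]
    [IsOrderedAddMonoid Γ] [Module ℚ Γ] {r : ℕ} (hr : r ≠ 0) {x y : Γ} :
    (r : ℚ)⁻¹ • x ≤ y ↔ x ≤ r • y := by
  rw [← nsmul_le_nsmul_iff_right hr, ← Nat.cast_smul_eq_nsmul ℚ r,
    smul_inv_smul₀ (Nat.cast_ne_zero.mpr hr)]

namespace Polynomial

lemma hasseDeriv_succ_X_sub_C_mul {R : Type*} [CommRing R] (a : R) (G : R[X]) (r : ℕ) :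
    hasseDeriv (r + 1) ((X - C a) * G) = (X - C a) * hasseDeriv (r + 1) G + hasseDeriv r G := by
  have hk : ∀ k, 1 < k → hasseDeriv k (X - C a) = 0 := fun k hk => by
    rw [map_sub, hasseDeriv_X _ hk, hasseDeriv_C _ _ (by omega), sub_zero]
  rw [hasseDeriv_mul, Finset.Nat.sum_antidiagonal_eq_sum_range_succ
    (fun i j => hasseDeriv i (X - C a) * hasseDeriv j G), Finset.sum_range_succ',
    Finset.sum_eq_single_of_mem 0 (Finset.mem_range.mpr (by omega))
      fun i _ hi => by rw [hk (i + 1) (by omega), zero_mul]]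
  simp [add_comm]

lemma map_hasseDeriv {R S : Type*} [Semiring R] [Semiring S] (φ : R →+* S) (f : R[X]) (r : ℕ) :
    (hasseDeriv r f).map φ = hasseDeriv r (f.map φ) := by
  ext n
  simp [coeff_map, hasseDeriv_coeff]

end Polynomial

section ValuedPolynomials

variable {Γ : Type*} [AddCommGroup Γ] [LinearOrder Γ] [IsOrderedAddMonoid Γ]
  {K : Type*} [Field K] {L : Type*} [Field L]

lemma coe_aval {F : Type*} [Field F] {v : AddValuation F[X] (WithTop Γ)} (hv : TrivialSupport v)
    {f : F[X]} (hf : f ≠ 0) : ((aval v f : Γ) : WithTop Γ) = v f := by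
  obtain ⟨g, hg⟩ := WithTop.ne_top_iff_exists.mp fun h => hf (hv f h)
  rw [aval, ← hg, WithTop.untopD_coe]

lemma TrivialSupport.of_isExtension [Algebra K L] {ν : AddValuation K[X] (WithTop Γ)}
    {μ : AddValuation L[X] (WithTop Γ)} (hμ : TrivialSupport μ) (hext : IsExtension μ ν) :
    TrivialSupport ν := fun f hf =>
  (Polynomial.map_eq_zero_iff (algebraMap K L).injective).mp (hμ _ ((hext f).trans hf))

variable {μ : AddValuation L[X] (WithTop Γ)}

lemma valuation_C_sub_eq_min_of_ne {a c : L} (h : μ (X - C a) ≠ μ (X - C c)) :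
    μ (C (c - a)) = min (μ (X - C a)) (μ (X - C c)) := by
  rw [show C (c - a) = (X - C a) + -(X - C c) by rw [C_sub]; ring,
    μ.map_add_of_distinct_val (by rwa [μ.map_neg]), μ.map_neg]

lemma valuation_C_sub_eq_of_lt {a c : L} (h : μ (X - C a) < μ (X - C c)) :
    μ (C (c - a)) = μ (X - C a) :=
  (valuation_C_sub_eq_min_of_ne h.ne).trans (min_eq_left h.le)

variable [IsAlgClosed L]

lemma valuation_eq_add_sum_roots (F : L[X]) :
    μ F = μ (C F.leadingCoeff) + (F.roots.map fun a => μ (X - C a)).sum := by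
  conv_lhs => rw [(IsAlgClosed.splits F).eq_prod_roots]
  rw [μ.map_mul, μ.map_multiset_prod, Multiset.map_map]
  rfl

lemma valuation_C_eval_eq_add_sum_roots (F : L[X]) (c : L) :
    μ (C (F.eval c)) = μ (C F.leadingCoeff) + (F.roots.map fun a => μ (C (c - a))).sum := by
  rw [(IsAlgClosed.splits F).eval_eq_prod_roots, C_mul, μ.map_mul, map_multiset_prod,
    μ.map_multiset_prod, Multiset.map_map, Multiset.map_map]
  rfl

lemma valuation_C_eval_eq_of_forall_roots_lt {F : L[X]} {c : L}
    (h : ∀ a ∈ F.roots, μ (X - C a) < μ (X - C c)) : μ (C (F.eval c)) = μ F := by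
  rw [valuation_C_eval_eq_add_sum_roots, valuation_eq_add_sum_roots F,
    Multiset.map_congr rfl fun a ha => valuation_C_sub_eq_of_lt (h a ha)]

lemma valuation_C_eval_lt_of_mem_roots (hμ : TrivialSupport μ) {F : L[X]} (hF : F ≠ 0) {b c : L}
    (hb : b ∈ F.roots) (hlt : μ (C (c - b)) < μ (X - C b))
    (hle : ∀ a ∈ F.roots, μ (C (c - a)) ≤ μ (X - C a)) : μ (C (F.eval c)) < μ F := by
  obtain ⟨t, ht⟩ := Multiset.exists_cons_of_mem hb
  have hsum : (t.map fun a => μ (C (c - a))).sum ≤ (t.map fun a => μ (X - C a)).sum :=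
    Multiset.sum_map_le_sum_map _ _ fun a ha => hle a (ht ▸ Multiset.mem_cons_of_mem ha)
  have hfin : μ F ≠ ⊤ := fun h => hF (hμ F h)
  rw [valuation_eq_add_sum_roots F, ht, Multiset.map_cons, Multiset.sum_cons] at hfin ⊢
  obtain ⟨hlc, -, ht_fin⟩ : μ (C F.leadingCoeff) ≠ ⊤ ∧ μ (X - C b) ≠ ⊤ ∧ _ := by
    simpa only [WithTop.add_ne_top] using hfin
  rw [valuation_C_eval_eq_add_sum_roots, ht, Multiset.map_cons, Multiset.sum_cons]
  exact WithTop.add_lt_add_left hlc <|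
    (WithTop.add_lt_add_right (ne_top_of_le_ne_top ht_fin hsum) hlt).trans_le (by gcongr)

end ValuedPolynomials

section HasseDerivOfProduct

variable {Γ : Type*} [AddCommGroup Γ] [LinearOrder Γ] [IsOrderedAddMonoid Γ]
  {L : Type*} [Field L] {μ : AddValuation L[X] (WithTop Γ)} {δ : Γ}

lemma TrivialSupport.valuation_prod_X_sub_C_ne_top (hμ : TrivialSupport μ) (s : Multiset L) :
    μ (s.map (X - C ·)).prod ≠ ⊤ := fun h =>
  (monic_multiset_prod_of_monic _ _ fun b _ => monic_X_sub_C b).ne_zero (hμ _ h)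

lemma valuation_prod_le_hasseDeriv_add {s : Multiset L} (hs : ∀ a ∈ s, μ (X - C a) ≤ δ)
    (r : ℕ) :
    μ (s.map (X - C ·)).prod ≤ μ (hasseDeriv r (s.map (X - C ·)).prod) + ↑(r • δ) := by
  induction s using Multiset.induction_on generalizing r with
  | empty =>
    rcases r.eq_zero_or_pos with rfl | hr
    · simp
    · simp [hasseDeriv_apply_one _ hr]
  | cons a t ih =>
    have ha := hs a (Multiset.mem_cons_self a t)
    have ih := ih fun b hb => hs b (Multiset.mem_cons_of_mem hb)
    set P := (t.map (X - C ·)).prod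
    rw [Multiset.map_cons, Multiset.prod_cons]
    cases r with
    | zero => simp
    | succ r =>
      rw [hasseDeriv_succ_X_sub_C_mul, μ.map_mul]
      calc μ (X - C a) + μ P
          ≤ min (μ ((X - C a) * hasseDeriv (r + 1) P)) (μ (hasseDeriv r P)) +
              ↑((r + 1) • δ) := by
            rw [← min_add_add_right, μ.map_mul, add_assoc]
            refine le_min (by gcongr; exact ih (r + 1)) ?_
            calc μ (X - C a) + μ P ≤ μ P + ↑δ := by rw [add_comm]; gcongr
              _ ≤ μ (hasseDeriv r P) + ↑(r • δ) + ↑δ := by gcongr; exact ih r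
              _ = _ := by rw [succ_nsmul, WithTop.coe_add, add_assoc]
        _ ≤ _ := by gcongr; exact μ.map_add _ _

lemma valuation_prod_lt_hasseDeriv_add (hμ : TrivialSupport μ) {s : Multiset L}
    (hs : ∀ a ∈ s, μ (X - C a) ≤ δ) {r : ℕ}
    (hr : s.countP (fun a => μ (X - C a) = δ) < r) :
    μ (s.map (X - C ·)).prod < μ (hasseDeriv r (s.map (X - C ·)).prod) + ↑(r • δ) := by
  induction s using Multiset.induction_on generalizing r with
  | empty => simp [hasseDeriv_apply_one _ (by simpa using hr)]
  | cons a t ih =>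
    have ha := hs a (Multiset.mem_cons_self a t)
    have hst : ∀ b ∈ t, μ (X - C b) ≤ δ := fun b hb => hs b (Multiset.mem_cons_of_mem hb)
    set P := (t.map (X - C ·)).prod
    have hP : μ P ≠ ⊤ := hμ.valuation_prod_X_sub_C_ne_top t
    obtain ⟨r, rfl⟩ : ∃ k, r = k + 1 := Nat.exists_eq_add_one.mpr (by omega)
    rw [Multiset.countP_cons] at hr
    rw [Multiset.map_cons, Multiset.prod_cons, hasseDeriv_succ_X_sub_C_mul, μ.map_mul]
    refine lt_of_lt_of_le ?_ (add_le_add_left (μ.map_add _ _) _)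
    rw [← min_add_add_right, lt_min_iff]
    constructor
    · rw [μ.map_mul, add_assoc]
      exact WithTop.add_lt_add_left (ne_top_of_le_ne_top WithTop.coe_ne_top ha)
        (ih hst (by split_ifs at hr <;> omega))
    rw [succ_nsmul, WithTop.coe_add, ← add_assoc]
    rcases ha.lt_or_eq with hlt | heq
    · calc μ (X - C a) + μ P < ↑δ + μ P := WithTop.add_lt_add_right hP hlt
        _ ≤ _ := by rw [add_comm]; gcongr; exact valuation_prod_le_hasseDeriv_add hst r
    · rw [if_pos heq] at hr
      rw [heq, add_comm]
      exact WithTop.add_lt_add_right WithTop.coe_ne_top (ih hst (by omega))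

lemma valuation_prod_eq_hasseDeriv_countP_add (hμ : TrivialSupport μ) {s : Multiset L}
    (hs : ∀ a ∈ s, μ (X - C a) ≤ δ) :
    μ (s.map (X - C ·)).prod =
      μ (hasseDeriv (s.countP fun a => μ (X - C a) = δ) (s.map (X - C ·)).prod) +
        ↑((s.countP fun a => μ (X - C a) = δ) • δ) := by
  induction s using Multiset.induction_on with
  | empty => simp
  | cons a t ih =>
    have ha := hs a (Multiset.mem_cons_self a t)
    have hst : ∀ b ∈ t, μ (X - C b) ≤ δ := fun b hb => hs b (Multiset.mem_cons_of_mem hb)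
    have ih := ih hst
    set P := (t.map (X - C ·)).prod
    have hP : μ P ≠ ⊤ := hμ.valuation_prod_X_sub_C_ne_top t
    rw [Multiset.countP_cons, Multiset.map_cons, Multiset.prod_cons, μ.map_mul]
    generalize hm : t.countP (fun a => μ (X - C a) = δ) = m at ih
    rcases ha.lt_or_eq with hlt | heq
    · rw [if_neg hlt.ne, add_zero]
      rcases m with _ | k
      · simp
      have hA :
          μ ((X - C a) * hasseDeriv (k + 1) P) + ↑((k + 1) • δ) = μ (X - C a) + μ P := by
        rw [μ.map_mul, add_assoc, ← ih]
      have hlt' : μ ((X - C a) * hasseDeriv (k + 1) P) < μ (hasseDeriv k P) := by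
        rw [← WithTop.add_lt_add_iff_right (WithTop.coe_ne_top (a := (k + 1) • δ)), hA]
        calc μ (X - C a) + μ P < ↑δ + μ P := WithTop.add_lt_add_right hP hlt
          _ ≤ μ (hasseDeriv k P) + ↑(k • δ) + ↑δ := by
            rw [add_comm]; gcongr; exact valuation_prod_le_hasseDeriv_add hst k
          _ = μ (hasseDeriv k P) + ↑((k + 1) • δ) := by
            rw [succ_nsmul, WithTop.coe_add, add_assoc]
      rw [hasseDeriv_succ_X_sub_C_mul, μ.map_add_eq_of_lt_left hlt', hA]
    · rw [if_pos heq, hasseDeriv_succ_X_sub_C_mul]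
      have hB : μ (hasseDeriv m P) + ↑((m + 1) • δ) = μ (X - C a) + μ P := by
        rw [succ_nsmul, WithTop.coe_add, ← add_assoc, ← ih, heq, add_comm]
      have hlt' : μ (hasseDeriv m P) < μ ((X - C a) * hasseDeriv (m + 1) P) := by
        rw [← WithTop.add_lt_add_iff_right (WithTop.coe_ne_top (a := (m + 1) • δ)), hB,
          μ.map_mul, add_assoc]
        exact WithTop.add_lt_add_left (heq ▸ WithTop.coe_ne_top)
          (valuation_prod_lt_hasseDeriv_add hμ hst (hm ▸ Nat.lt_succ_self m))
      rw [μ.map_add_eq_of_lt_right hlt', hB]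

end HasseDerivOfProduct

section EpsEqDelta

variable {Γ : Type*} [AddCommGroup Γ] [LinearOrder Γ] [IsOrderedAddMonoid Γ]
  {K : Type*} [Field K] {L : Type*} [Field L] [Algebra K L]
  {ν : AddValuation K[X] (WithTop Γ)} {μ : AddValuation L[X] (WithTop Γ)}

lemma valuation_X_sub_C_le_delta (hμ : TrivialSupport μ) {f : K[X]} {a : L}
    (ha : a ∈ (f.map (algebraMap K L)).roots) : μ (X - C a) ≤ ↑(delta μ f) := by
  classical
  unfold delta
  split_ifs with h
  · rw [← coe_aval hμ (X_sub_C_ne_zero a), WithTop.coe_le_coe]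
    exact Finset.le_sup' (fun a => aval μ (X - C a)) (Multiset.mem_toFinset.mpr ha)
  · exact absurd ⟨a, Multiset.mem_toFinset.mpr ha⟩ h

lemma exists_valuation_X_sub_C_eq_delta [IsAlgClosed L] (hμ : TrivialSupport μ) {f : K[X]}
    (hf : 0 < f.natDegree) :
    ∃ a ∈ (f.map (algebraMap K L)).roots, μ (X - C a) = ↑(delta μ f) := by
  classical
  have hF : f.map (algebraMap K L) ≠ 0 :=
    (Polynomial.map_ne_zero_iff (algebraMap K L).injective).mpr (ne_zero_of_natDegree_gt hf)
  unfold delta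
  split_ifs with h
  · obtain ⟨a, ha, heq⟩ := Finset.exists_mem_eq_sup' h fun a => aval μ (X - C a)
    exact ⟨a, Multiset.mem_toFinset.mp ha, by rw [heq, coe_aval hμ (X_sub_C_ne_zero a)]⟩
  · obtain ⟨a, ha⟩ := IsAlgClosed.exists_root (f.map (algebraMap K L))
      (by rw [degree_map]; exact (natDegree_pos_iff_degree_pos.mp hf).ne')
    exact absurd ⟨a, Multiset.mem_toFinset.mpr ((mem_roots hF).mpr ha)⟩ h

lemma mem_epsSupport {f : K[X]} {r : ℕ} :
    r ∈ epsSupport f ↔ r ∈ Finset.Icc 1 f.natDegree ∧ f.hasseDeriv r ≠ 0 := by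
  rw [epsSupport, @Finset.mem_filter _ _ (Classical.decPred _)]

lemma eps_eq_of_le_of_eq [Module ℚ Γ] (hν : TrivialSupport ν) {f : K[X]} (hf : f ≠ 0)
    {d : Γ} (hle : ∀ r, ν f ≤ ν (hasseDeriv r f) + ↑(r • d))
    (heq : ∃ m ∈ Finset.Icc 1 f.natDegree, ν f = ν (hasseDeriv m f) + ↑(m • d)) :
    eps ν f = d := by
  obtain ⟨m, hm, hfm⟩ := heq
  have hνf := coe_aval hν hf
  have hm0 : hasseDeriv m f ≠ 0 := fun h => by
    rw [h, ν.map_zero, top_add, ← hνf] at hfm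
    exact WithTop.coe_ne_top hfm
  have hmem : m ∈ epsSupport f := mem_epsSupport.mpr ⟨hm, hm0⟩
  have hm_pos : m ≠ 0 := by have := (Finset.mem_Icc.mp hm).1; omega
  rw [← hνf, ← coe_aval hν hm0, ← WithTop.coe_add, WithTop.coe_inj] at hfm
  rw [eps, dif_pos ⟨m, hmem⟩]
  refine le_antisymm (Finset.sup'_le _ _ fun r hr => ?_) (le_of_eq_of_le ?_ (Finset.le_sup' _ hmem))
  · obtain ⟨hr, hr0⟩ := mem_epsSupport.mp hr
    have hfr := hle r
    rw [← hνf, ← coe_aval hν hr0, ← WithTop.coe_add, WithTop.coe_le_coe] at hfr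
    rw [inv_natCast_smul_le_iff (by have := (Finset.mem_Icc.mp hr).1; omega), sub_le_iff_le_add']
    exact hfr
  · rw [hfm, add_sub_cancel_left, ← Nat.cast_smul_eq_nsmul ℚ,
      inv_smul_smul₀ (Nat.cast_ne_zero.mpr hm_pos)]

variable [IsAlgClosed L]

lemma valuation_hasseDeriv_eq_leadingCoeff_add (hext : IsExtension μ ν) (f : K[X]) (r : ℕ) :
    ν (hasseDeriv r f) = μ (C (f.map (algebraMap K L)).leadingCoeff) +
      μ (hasseDeriv r ((f.map (algebraMap K L)).roots.map (X - C ·)).prod) := by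
  rw [← hext, map_hasseDeriv]
  conv_lhs => rw [(IsAlgClosed.splits (f.map (algebraMap K L))).eq_prod_roots]
  rw [← smul_eq_C_mul, LinearMap.map_smul, smul_eq_C_mul, μ.map_mul]

lemma valuation_eq_leadingCoeff_add (hext : IsExtension μ ν) (f : K[X]) :
    ν f = μ (C (f.map (algebraMap K L)).leadingCoeff) +
      μ ((f.map (algebraMap K L)).roots.map (X - C ·)).prod := by
  simpa only [hasseDeriv_zero'] using valuation_hasseDeriv_eq_leadingCoeff_add hext f 0

lemma valuation_le_hasseDeriv_add_delta (hμ : TrivialSupport μ) (hext : IsExtension μ ν)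
    (f : K[X]) (r : ℕ) : ν f ≤ ν (hasseDeriv r f) + ↑(r • delta μ f) := by
  rw [valuation_eq_leadingCoeff_add hext, valuation_hasseDeriv_eq_leadingCoeff_add hext, add_assoc]
  gcongr
  exact valuation_prod_le_hasseDeriv_add (fun a ha => valuation_X_sub_C_le_delta hμ ha) r

lemma exists_valuation_eq_hasseDeriv_add_delta (hμ : TrivialSupport μ) (hext : IsExtension μ ν)
    {f : K[X]} (hf : 0 < f.natDegree) :
    ∃ m ∈ Finset.Icc 1 f.natDegree, ν f = ν (hasseDeriv m f) + ↑(m • delta μ f) := by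
  have hs : ∀ a ∈ (f.map (algebraMap K L)).roots, μ (X - C a) ≤ ↑(delta μ f) :=
    fun a ha => valuation_X_sub_C_le_delta hμ ha
  refine ⟨(f.map (algebraMap K L)).roots.countP fun a => μ (X - C a) = ↑(delta μ f),
    Finset.mem_Icc.mpr ⟨?_, ?_⟩, ?_⟩
  · obtain ⟨a, ha, hδ⟩ := exists_valuation_X_sub_C_eq_delta hμ hf
    exact Multiset.countP_pos.mpr ⟨a, ha, hδ⟩
  · exact (Multiset.countP_le_card _ _).trans
      (by rw [IsAlgClosed.card_roots_eq_natDegree, natDegree_map])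
  · rw [valuation_eq_leadingCoeff_add hext, valuation_hasseDeriv_eq_leadingCoeff_add hext,
      add_assoc, ← valuation_prod_eq_hasseDeriv_countP_add hμ hs]

theorem eps_eq_delta [Module ℚ Γ] (hμ : TrivialSupport μ) (hext : IsExtension μ ν) {f : K[X]}
    (hf : 0 < f.natDegree) : eps ν f = delta μ f :=
  eps_eq_of_le_of_eq (hμ.of_isExtension hext) (ne_zero_of_natDegree_gt hf)
    (valuation_le_hasseDeriv_add_delta hμ hext f)
    (exists_valuation_eq_hasseDeriv_add_delta hμ hext hf)

end EpsEqDelta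

section Truncation

variable {Γ : Type*} [AddCommGroup Γ] [LinearOrder Γ] [IsOrderedAddMonoid Γ]
  {K : Type*} [Field K]

lemma degree_qCoeff_lt {q : K[X]} (hq : q ≠ 0) (i : ℕ) (p : K[X]) :
    (qCoeff q i p).degree < q.degree := by
  induction i generalizing p with
  | zero => exact EuclideanDomain.mod_lt p hq
  | succ i ih => exact ih (p / q)

lemma sum_qCoeff_mul_pow {q : K[X]} (hq : 0 < q.degree) (N : ℕ) {p : K[X]} (hp : p.degree < N) :
    ∑ i ∈ Finset.range N, qCoeff q i p * q ^ i = p := by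
  induction N generalizing p with
  | zero =>
    have : p = 0 := by_contra fun h => (zero_le_degree_iff.mpr h).not_gt (by exact_mod_cast hp)
    simp [this]
  | succ N ih =>
    have hdiv : (p / q).degree < N := by
      rcases eq_or_ne p 0 with rfl | hp0
      · simp
      · refine (degree_div_lt hp0 hq).trans_le ?_
        rw [degree_eq_natDegree hp0] at hp ⊢
        exact_mod_cast Nat.lt_succ_iff.mp (by exact_mod_cast hp)
    simp only [Finset.sum_range_succ', qCoeff, pow_succ, ← mul_assoc, ← Finset.sum_mul, ih hdiv,
      pow_zero, mul_one]
    rw [mul_comm]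
    exact EuclideanDomain.div_add_mod p q

lemma trunc_le_of_forall_degree_lt {ν w : AddValuation K[X] (WithTop Γ)} {Q : K[X]}
    (hQ : 0 < Q.degree) (hwQ : w Q = ν Q) (hw : ∀ p, p.degree < Q.degree → w p = ν p)
    (g : K[X]) : trunc ν Q g ≤ w g := by
  conv_rhs => rw [← sum_qCoeff_mul_pow hQ (g.natDegree + 1)
    (degree_le_natDegree.trans_lt (WithBot.coe_lt_coe.mpr g.natDegree.lt_succ_self))]
  refine w.map_le_sum fun i hi => ?_
  rw [w.map_mul, w.map_pow, hwQ, hw _ (degree_qCoeff_lt (ne_zero_of_degree_gt hQ) i g),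
    ← ν.map_pow, ← ν.map_mul]
  exact Finset.inf_le hi

end Truncation

section KeyPolynomials

variable {Γ : Type*} [AddCommGroup Γ] [LinearOrder Γ] [IsOrderedAddMonoid Γ] [Module ℚ Γ]
  {K : Type*} [Field K] {L : Type*} [Field L]
  {ν : AddValuation K[X] (WithTop Γ)} {μ : AddValuation L[X] (WithTop Γ)}

lemma IsKeyPoly.eps_lt_of_natDegree_lt {Q p : K[X]} (hQ : IsKeyPoly ν Q) (hp : 0 < p.natDegree)
    (hpQ : p.natDegree < Q.natDegree) : eps ν p < eps ν Q :=
  lt_of_not_ge fun h => (hQ.2.2 p hp h).not_gt hpQ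

lemma IsKeyPoly.valuation_X_sub_C_lt_eps [Algebra K L] [IsAlgClosed L] (hμ : TrivialSupport μ)
    (hext : IsExtension μ ν) {Q p : K[X]} (hQ : IsKeyPoly ν Q) (hpQ : p.degree < Q.degree)
    {a : L} (ha : a ∈ (p.map (algebraMap K L)).roots) : μ (X - C a) < ↑(eps ν Q) := by
  have hp : 0 < p.natDegree := Nat.pos_of_ne_zero fun h => by
    rw [eq_C_of_natDegree_eq_zero h, map_C, roots_C] at ha
    exact Multiset.notMem_zero a ha
  refine (valuation_X_sub_C_le_delta hμ ha).trans_lt ?_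
  rw [← eps_eq_delta hμ hext hp, WithTop.coe_lt_coe]
  exact hQ.eps_lt_of_natDegree_lt hp (natDegree_lt_natDegree (ne_zero_of_natDegree_gt hp) hpQ)

lemma valuation_C_sub_C_eq_eps {Λ : Set K[X]} {a : K[X] → L}
    (ha : ∀ Q ∈ Λ, μ (X - C (a Q)) = ↑(eps ν Q))
    {Q Q' : K[X]} (hQ : Q ∈ Λ) (hQ' : Q' ∈ Λ) (hlt : eps ν Q < eps ν Q') :
    μ (C (a Q') - C (a Q)) = ↑(eps ν Q) := by
  rw [← C_sub, valuation_C_sub_eq_of_lt (by rw [ha Q hQ, ha Q' hQ']; exact_mod_cast hlt), ha Q hQ]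

end KeyPolynomials

section CompleteSequence

variable {Γ : Type*} [AddCommGroup Γ] [LinearOrder Γ] [IsOrderedAddMonoid Γ] [Module ℚ Γ]
  {K : Type*} [Field K] {L : Type*} [Field L] [Algebra K L] [IsAlgClosure K L]
  {ν : AddValuation K[X] (WithTop Γ)} {μ : AddValuation L[X] (WithTop Γ)} {Λ : Set K[X]}

lemma exists_mem_eps_gt_notMem (hnolast : ∀ Q ∈ Λ, ∃ Q' ∈ Λ, eps ν Q < eps ν Q')
    {Q : K[X]} (hQ : Q ∈ Λ) (T : Finset Γ) :
    ∃ Q' ∈ Λ, eps ν Q < eps ν Q' ∧ eps ν Q' ∉ T := by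
  have hinf : (eps ν '' {Q' ∈ Λ | eps ν Q < eps ν Q'}).Infinite := by
    refine Set.infinite_image_of_forall_exists_gt (hnolast Q hQ) fun Q' ⟨hQ', hlt⟩ => ?_
    obtain ⟨Q'', hQ'', hlt'⟩ := hnolast Q' hQ'
    exact ⟨Q'', ⟨hQ'', hlt.trans hlt'⟩, hlt'⟩
  obtain ⟨_, ⟨Q', ⟨hQ', hlt⟩, rfl⟩, hT⟩ := hinf.exists_notMem_finset T
  exact ⟨Q', hQ', hlt, hT⟩

theorem exists_mem_valuation_X_sub_C_lt_eps (hμ : TrivialSupport μ) (hext : IsExtension μ ν)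
    (hkey : ∀ Q ∈ Λ, IsKeyPoly ν Q) (hcompl : ∀ f : K[X], ∃ Q ∈ Λ, trunc ν Q f = ν f)
    (hnolast : ∀ Q ∈ Λ, ∃ Q' ∈ Λ, eps ν Q < eps ν Q') (b : L) :
    ∃ Q ∈ Λ, μ (X - C b) < ↑(eps ν Q) := by
  classical
  have : IsAlgClosed L := IsAlgClosure.isAlgClosed K
  by_contra! hb
  set G := (minpoly K b).map (algebraMap K L)
  have hG : G ≠ 0 := (Polynomial.map_ne_zero_iff (algebraMap K L).injective).mpr
    (minpoly.ne_zero (Algebra.IsIntegral.isIntegral b))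
  have hbG : b ∈ G.roots :=
    (mem_roots hG).mpr (by rw [IsRoot, eval_map_algebraMap, minpoly.aeval])
  obtain ⟨Q, hQ, hgQ⟩ := hcompl (minpoly K b)
  obtain ⟨Q', hQ', hQQ', hT⟩ :=
    exists_mem_eps_gt_notMem hnolast hQ (G.roots.toFinset.image fun a => aval μ (X - C a))
  obtain ⟨Q'', hQ'', hQ'Q''⟩ := hnolast Q' hQ'
  obtain ⟨c, -, hc⟩ := exists_valuation_X_sub_C_eq_delta hμ (hkey Q' hQ').2.1
  rw [← eps_eq_delta hμ hext (hkey Q' hQ').2.1] at hc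
  let w := μ.comap ((C : L →+* L[X]).comp (aeval (R := K) c).toRingHom)
  have hw_apply : ∀ p, w p = μ (C ((p.map (algebraMap K L)).eval c)) := fun p => by
    rw [eval_map_algebraMap]; rfl
  have hQc : ↑(eps ν Q) < μ (X - C c) := hc ▸ WithTop.coe_lt_coe.mpr hQQ'
  have hw : ∀ p : K[X],
      (∀ a ∈ (p.map (algebraMap K L)).roots, μ (X - C a) < μ (X - C c)) → w p = ν p :=
    fun p hp => by rw [← hext, hw_apply, valuation_C_eval_eq_of_forall_roots_lt hp]
  have hgw : ν (minpoly K b) ≤ w (minpoly K b) :=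
    hgQ ▸ trunc_le_of_forall_degree_lt (natDegree_pos_iff_degree_pos.mp (hkey Q hQ).2.1)
      (hw Q fun a ha => (valuation_X_sub_C_le_delta hμ ha).trans_lt
        (by rwa [← eps_eq_delta hμ hext (hkey Q hQ).2.1]))
      (fun p hp => hw p fun a ha =>
        ((hkey Q hQ).valuation_X_sub_C_lt_eps hμ hext hp ha).trans hQc) _
  have hcb : μ (X - C c) < μ (X - C b) :=
    hc ▸ (WithTop.coe_lt_coe.mpr hQ'Q'').trans_le (hb Q'' hQ'')
  have hwg : w (minpoly K b) < ν (minpoly K b) := by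
    rw [← hext, hw_apply]
    refine valuation_C_eval_lt_of_mem_roots hμ hG hbG ?_ fun a ha => ?_
    · rw [valuation_C_sub_eq_min_of_ne hcb.ne', min_eq_right hcb.le]
      exact hcb
    · have hne : μ (X - C a) ≠ μ (X - C c) := by
        rw [hc, ← coe_aval hμ (X_sub_C_ne_zero a), Ne, WithTop.coe_inj]
        rintro heq
        exact hT (heq ▸ Finset.mem_image_of_mem _ (Multiset.mem_toFinset.mpr ha))
      rw [valuation_C_sub_eq_min_of_ne hne]
      exact min_le_left _ _
  exact hgw.not_gt hwg

theorem exists_mem_forall_valuation_X_sub_C_lt_eps (hμ : TrivialSupport μ)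
    (hext : IsExtension μ ν) (hkey : ∀ Q ∈ Λ, IsKeyPoly ν Q)
    (hcompl : ∀ f : K[X], ∃ Q ∈ Λ, trunc ν Q f = ν f)
    (hnolast : ∀ Q ∈ Λ, ∃ Q' ∈ Λ, eps ν Q < eps ν Q') (T : Finset L) :
    ∃ Q ∈ Λ, ∀ b ∈ T, μ (X - C b) < ↑(eps ν Q) := by
  choose Qb hQb hlt using exists_mem_valuation_X_sub_C_lt_eps hμ hext hkey hcompl hnolast
  rcases T.eq_empty_or_nonempty with rfl | hT
  · obtain ⟨Q, hQ, -⟩ := hcompl 1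
    exact ⟨Q, hQ, by simp⟩
  · obtain ⟨b₀, -, hmax⟩ := T.exists_max_image (fun b => eps ν (Qb b)) hT
    exact ⟨Qb b₀, hQb b₀, fun b hb => (hlt b).trans_le (WithTop.coe_le_coe.mpr (hmax b hb))⟩

theorem exists_mem_forall_valuation_C_eval_eq (hμ : TrivialSupport μ) (hext : IsExtension μ ν)
    (hkey : ∀ Q ∈ Λ, IsKeyPoly ν Q) (hcompl : ∀ f : K[X], ∃ Q ∈ Λ, trunc ν Q f = ν f)
    (hnolast : ∀ Q ∈ Λ, ∃ Q' ∈ Λ, eps ν Q < eps ν Q') {a : K[X] → L}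
    (ha : ∀ Q ∈ Λ, μ (X - C (a Q)) = ↑(eps ν Q)) (f : L[X]) :
    ∃ Q ∈ Λ, ∀ Q' ∈ Λ, eps ν Q ≤ eps ν Q' → μ (C (f.eval (a Q'))) = μ f := by
  classical
  have : IsAlgClosed L := IsAlgClosure.isAlgClosed K
  obtain ⟨Q, hQ, hroots⟩ :=
    exists_mem_forall_valuation_X_sub_C_lt_eps hμ hext hkey hcompl hnolast f.roots.toFinset
  refine ⟨Q, hQ, fun Q' hQ' hle => valuation_C_eval_eq_of_forall_roots_lt fun r hr => ?_⟩
  rw [ha Q' hQ']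
  exact (hroots r (Multiset.mem_toFinset.mpr hr)).trans_le (WithTop.coe_le_coe.mpr hle)

end CompleteSequence

theorem keyPoly_roots_pseudoConvergent_general {K : Type*} [Field K] {Γ : Type*}
    [AddCommGroup Γ] [LinearOrder Γ] [IsOrderedAddMonoid Γ] [Module ℚ Γ]
    {L : Type*} [Field L] [Algebra K L] [IsAlgClosure K L]
    (ν : AddValuation (Polynomial K) (WithTop Γ)) (μ : AddValuation (Polynomial L) (WithTop Γ))
    (hμ : TrivialSupport μ) (hext : IsExtension μ ν)
    (Λ : Set (Polynomial K))
    (hkey : ∀ Q ∈ Λ, IsKeyPoly ν Q)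
    (hcompl : ∀ f : Polynomial K, ∃ Q ∈ Λ, trunc ν Q f = ν f)
    (hnolast : ∀ Q ∈ Λ, ∃ Q' ∈ Λ, eps ν Q < eps ν Q')
    (a : Polynomial K → L)
    (hmax : ∀ Q ∈ Λ, μ (X - C (a Q)) = ((delta μ Q : Γ) : WithTop Γ)) :
    -- `{a Q}` is a pseudo-convergent sequence for `μ`
    (∀ Q₁ ∈ Λ, ∀ Q₂ ∈ Λ, ∀ Q₃ ∈ Λ, eps ν Q₁ < eps ν Q₂ → eps ν Q₂ < eps ν Q₃ →
        μ (C (a Q₂) - C (a Q₁)) < μ (C (a Q₃) - C (a Q₂))) ∧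
    -- `x` is a limit of `{a Q}`
    (∀ Q ∈ Λ, ∀ Q' ∈ Λ, eps ν Q < eps ν Q' →
        μ (X - C (a Q)) = μ (C (a Q') - C (a Q))) ∧
    -- `{a Q}` is of transcendental type: the value of every polynomial is eventually fixed
    (∀ f : Polynomial L, ∃ Q ∈ Λ, ∀ Q' ∈ Λ, eps ν Q ≤ eps ν Q' →
        μ (C (Polynomial.eval (a Q') f)) = μ (C (Polynomial.eval (a Q) f))) ∧
    -- `{a Q}` has no limit in `L`
    ¬ ∃ b : L, ∀ Q ∈ Λ, ∀ Q' ∈ Λ, eps ν Q < eps ν Q' →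
        μ (C b - C (a Q)) = μ (C (a Q') - C (a Q)) := by
  have : IsAlgClosed L := IsAlgClosure.isAlgClosed K
  have hval : ∀ Q ∈ Λ, μ (X - C (a Q)) = ↑(eps ν Q) := fun Q hQ => by
    rw [hmax Q hQ, eps_eq_delta hμ hext (hkey Q hQ).2.1]
  refine ⟨?_, ?_, fun f => ?_, ?_⟩
  · intro Q₁ h₁ Q₂ h₂ Q₃ h₃ h₁₂ h₂₃
    rw [valuation_C_sub_C_eq_eps hval h₁ h₂ h₁₂, valuation_C_sub_C_eq_eps hval h₂ h₃ h₂₃]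
    exact_mod_cast h₁₂
  · intro Q hQ Q' hQ' hlt
    rw [hval Q hQ, valuation_C_sub_C_eq_eps hval hQ hQ' hlt]
  · obtain ⟨Q, hQ, hconst⟩ :=
      exists_mem_forall_valuation_C_eval_eq hμ hext hkey hcompl hnolast hval f
    exact ⟨Q, hQ, fun Q' hQ' hle => (hconst Q' hQ' hle).trans (hconst Q hQ le_rfl).symm⟩
  · rintro ⟨b, hb⟩
    obtain ⟨Q, hQ, hbQ⟩ := exists_mem_valuation_X_sub_C_lt_eps hμ hext hkey hcompl hnolast b
    obtain ⟨Q', hQ', hlt⟩ := hnolast Q hQ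
    have hQb : ↑(eps ν Q) ≤ μ (X - C b) := by
      rw [show X - C b = (X - C (a Q)) - (C b - C (a Q)) by ring]
      exact μ.map_le_sub (hval Q hQ).ge
        ((hb Q hQ Q' hQ' hlt).trans (valuation_C_sub_C_eq_eps hval hQ hQ' hlt)).ge
    exact hQb.not_gt hbQ

/-- Let `Λ` be a complete sequence of key polynomials for `ν` without last
element and, for each `Q ∈ Λ`, let `a Q` be a root of `Q` with `μ(x - a Q) = δ(Q)`. Then
`{a Q}_{Q ∈ Λ}` (ordered by `ε`) is a pseudo-convergent sequence for `μ` of transcendental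
type, without a limit in `K̄`, and `x` is a limit of it. -/
theorem keyPoly_roots_pseudoConvergent {K : Type*} [Field K] {Γ : Type*}
    [AddCommGroup Γ] [LinearOrder Γ] [IsOrderedAddMonoid Γ] [Module ℚ Γ] [PosSMulStrictMono ℚ Γ]
    {L : Type*} [Field L] [Algebra K L] [IsAlgClosure K L]
    (ν : AddValuation (Polynomial K) (WithTop Γ)) (μ : AddValuation (Polynomial L) (WithTop Γ))
    (hν : TrivialSupport ν) (hμ : TrivialSupport μ) (hext : IsExtension μ ν)
    (Λ : Set (Polynomial K))
    (hkey : ∀ Q ∈ Λ, IsKeyPoly ν Q)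
    (hdist : ∀ Q ∈ Λ, ∀ Q' ∈ Λ, eps ν Q = eps ν Q' → Q = Q')
    (hwo : Λ.WellFoundedOn fun Q Q' => eps ν Q < eps ν Q')
    (hcompl : ∀ f : Polynomial K, ∃ Q ∈ Λ, trunc ν Q f = ν f)
    (hnolast : ∀ Q ∈ Λ, ∃ Q' ∈ Λ, eps ν Q < eps ν Q')
    (a : Polynomial K → L)
    (hroot : ∀ Q ∈ Λ, Polynomial.aeval (a Q) Q = 0)
    (hmax : ∀ Q ∈ Λ, μ (X - C (a Q)) = ((delta μ Q : Γ) : WithTop Γ)) :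
    -- `{a Q}` is a pseudo-convergent sequence for `μ`
    (∀ Q₁ ∈ Λ, ∀ Q₂ ∈ Λ, ∀ Q₃ ∈ Λ, eps ν Q₁ < eps ν Q₂ → eps ν Q₂ < eps ν Q₃ →
        μ (C (a Q₂) - C (a Q₁)) < μ (C (a Q₃) - C (a Q₂))) ∧
    -- `x` is a limit of `{a Q}`
    (∀ Q ∈ Λ, ∀ Q' ∈ Λ, eps ν Q < eps ν Q' →
        μ (X - C (a Q)) = μ (C (a Q') - C (a Q))) ∧
    -- `{a Q}` is of transcendental type: the value of every polynomial is eventually fixed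
    (∀ f : Polynomial L, ∃ Q ∈ Λ, ∀ Q' ∈ Λ, eps ν Q ≤ eps ν Q' →
        μ (C (Polynomial.eval (a Q') f)) = μ (C (Polynomial.eval (a Q) f))) ∧
    -- `{a Q}` has no limit in `L`
    ¬ ∃ b : L, ∀ Q ∈ Λ, ∀ Q' ∈ Λ, eps ν Q < eps ν Q' →
        μ (C b - C (a Q)) = μ (C (a Q') - C (a Q)) :=
  keyPoly_roots_pseudoConvergent_general ν μ hμ hext Λ hkey hcompl hnolast a hmax
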